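/- arXiv:alg-geom/9411009 — 2 statements merged into one kernel-verified Lean document; each statement's English description precedes it below -/
import Mathlib

section
/- Let Σ be a complete fan in N_ℝ with 1-dimensional cone generators e_1,…,e_n, acted on by a finite group G with (N_ℝ)^G = 0. Decompose Σ(1) into G-orbits Σ_1(1) ∪ … ∪ Σ_l(1). Then for each orbit Σ_i(1), the sum of the primitive generators over the orbit vanishes: Σ_{e_j ∈ Σ_i(1)} e_j = 0. Moreover, every G-invariant real linear relation Σ λ_j e_j = 0 with λ constant on G-orbits is a linear combination of these l orbit-sum relations, and these relations are linearly independent; hence the space of G-invariant relations among e_1,…,e_n has dimension exactly l. -/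
open scoped Classical

/-- The space of G-invariant linear relations among the ray generators e₁,…,e_n:
functions λ : Fin n → ℝ constant on G-orbits with Σ λᵢ eᵢ = 0. -/
noncomputable def relSubmodule (n d : ℕ) (G : Type*) [Group G] [MulAction G (Fin n)]
    (e : Fin n → (Fin d → ℝ)) : Submodule ℝ (Fin n → ℝ) where
  carrier := {l | (∀ (g : G) (i : Fin n), l (g • i) = l i) ∧ ∑ i, l i • e i = 0}
  add_mem' := by
    rintro a b ⟨ha1, ha2⟩ ⟨hb1, hb2⟩
    refine ⟨fun g i => by simp [ha1 g i, hb1 g i], ?_⟩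
    simp only [Pi.add_apply, add_smul, Finset.sum_add_distrib, ha2, hb2, add_zero]
  zero_mem' := by simp
  smul_mem' := by
    rintro c a ⟨ha1, ha2⟩
    refine ⟨fun g i => by simp [ha1 g i], ?_⟩
    simp only [Pi.smul_apply, smul_eq_mul, mul_smul, ← Finset.smul_sum, ha2, smul_zero]

set_option linter.unusedSectionVars false

section Aux

variable {n d : ℕ} {G : Type*} [Group G] [Finite G] [MulAction G (Fin n)]

lemma key_sum_zero (ρ : G →* ((Fin d → ℝ) ≃ₗ[ℝ] (Fin d → ℝ)))
    (e : Fin n → (Fin d → ℝ))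
    (hcompat : ∀ (g : G) (i : Fin n), ρ g (e i) = e (g • i))
    (hanis : ∀ v : Fin d → ℝ, (∀ g : G, ρ g v = v) → v = 0)
    (l : Fin n → ℝ) (hl : ∀ (g : G) (i : Fin n), l (g • i) = l i) :
    ∑ i, l i • e i = 0 := by
  apply hanis
  intro g
  have h1 : (ρ g) (∑ i, l i • e i) = ∑ i, l i • e (g • i) := by
    rw [map_sum]
    simp only [map_smul, hcompat]
  rw [h1]
  exact Fintype.sum_equiv (MulAction.toPerm g) _ _ (fun i => by
    simp only [MulAction.toPerm_apply, hl g i])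

lemma smul_mem_orbit_iff' (g : G) (i j : Fin n) :
    g • j ∈ MulAction.orbit G i ↔ j ∈ MulAction.orbit G i := by
  simp only [MulAction.mem_orbit_iff]
  constructor
  · rintro ⟨h, hh⟩
    exact ⟨g⁻¹ * h, by rw [mul_smul, hh, inv_smul_smul]⟩
  · rintro ⟨h, hh⟩
    exact ⟨g * h, by rw [mul_smul, hh]⟩

end Aux

/-- Let Σ be a complete regular fan in N_ℝ with primitive ray generators e₁,…,e_n
(spanning N_ℝ), invariant under a finite group G permuting the rays compatibly with a
linear action ρ having no nonzero fixed vector ((N_ℝ)^G = 0).  Then the sum of the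
generators over each G-orbit vanishes, and the space of G-invariant linear relations
among e₁,…,e_n (relations with coefficients constant on orbits) has dimension exactly
the number l of G-orbits on the rays. -/
theorem stmt_6 (n d : ℕ) (G : Type*) [Group G] [Finite G] [MulAction G (Fin n)]
    (ρ : G →* ((Fin d → ℝ) ≃ₗ[ℝ] (Fin d → ℝ)))
    (e : Fin n → (Fin d → ℝ))
    (hcompat : ∀ (g : G) (i : Fin n), ρ g (e i) = e (g • i))
    (hspan : Submodule.span ℝ (Set.range e) = ⊤)
    (hanis : ∀ v : Fin d → ℝ, (∀ g : G, ρ g v = v) → v = 0) :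
    (∀ i : Fin n, ∑ j ∈ Finset.univ.filter (fun j => j ∈ MulAction.orbit G i), e j = 0) ∧
    Module.finrank ℝ (relSubmodule n d G e) =
      Nat.card (MulAction.orbitRel.Quotient G (Fin n)) := by
  constructor
  · intro i
    have h := key_sum_zero ρ e hcompat hanis
      (fun j => if j ∈ MulAction.orbit G i then (1 : ℝ) else 0)
      (fun g j => by simp only [smul_mem_orbit_iff'])
    rw [← h, Finset.sum_filter]
    apply Finset.sum_congr rfl
    intro j _
    by_cases hj : j ∈ MulAction.orbit G i <;> simp [hj]
  · haveI : Fintype (MulAction.orbitRel.Quotient G (Fin n)) := Fintype.ofFinite _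
    let E : relSubmodule n d G e ≃ₗ[ℝ] (MulAction.orbitRel.Quotient G (Fin n) → ℝ) :=
      { toFun := fun l => Quotient.lift (l : Fin n → ℝ) (fun a b hab => by
          have hab' : a ∈ MulAction.orbit G b := hab
          obtain ⟨g, rfl⟩ := hab'
          exact l.2.1 g b)
        map_add' := fun a b => by
          funext q
          induction q using Quotient.ind
          rfl
        map_smul' := fun c a => by
          funext q
          induction q using Quotient.ind
          rfl
        invFun := fun f => ⟨fun i => f (Quotient.mk'' i), by
          have hc : ∀ (g : G) (i : Fin n),
              f (Quotient.mk'' (g • i)) = f (Quotient.mk'' i) := fun g i => by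
            congr 1
            exact Quotient.sound' ⟨g, rfl⟩
          exact ⟨hc, key_sum_zero ρ e hcompat hanis _ hc⟩⟩
        left_inv := fun l => by
          apply Subtype.ext
          funext i
          rfl
        right_inv := fun f => by
          funext q
          induction q using Quotient.ind
          rfl }
    rw [E.finrank_eq, Module.finrank_fintype_fun_eq_card, Nat.card_eq_fintype_card]
end

section
/- Let Σ be a complete regular fan in N_ℝ invariant under a finite group G with (N_ℝ)^G = 0, and let Σ(1) decompose into l G-orbits. Then the G-invariant part of the effective cone, Λ_eff(Σ)^G ⊂ (Pic(P_Σ) ⊗ ℝ)^G, is a simplicial cone of dimension l. Equivalently, (Pic(P_Σ) ⊗ ℝ)^G has dimension l and the cone of G-invariant effective classes is generated by l linearly independent elements (the sums of [D_j] over each G-orbit). -/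
open scoped Classical

/-- The real version of the map M → D(Σ) = ℝ^n, m ↦ (⟨m,eᵢ⟩)ᵢ. -/
noncomputable def divMapR (n d : ℕ) (e : Fin n → (Fin d → ℝ)) :
    (Fin d → ℝ) →ₗ[ℝ] (Fin n → ℝ) :=
  LinearMap.pi fun i => ∑ j, e i j • LinearMap.proj j

/-- Pic(P_Σ) ⊗ ℝ = ℝ^n / M_ℝ for the toric variety of a fan with rays e₁,…,e_n. -/
abbrev PicR (n d : ℕ) (e : Fin n → (Fin d → ℝ)) :=
  (Fin n → ℝ) ⧸ LinearMap.range (divMapR n d e)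

/-- The class in Pic ⊗ ℝ of the sum of the boundary divisors over a G-orbit O of rays. -/
noncomputable def orbitClass (n d : ℕ) (G : Type*) [Group G] [MulAction G (Fin n)]
    (e : Fin n → (Fin d → ℝ)) (O : MulAction.orbitRel.Quotient G (Fin n)) :
    PicR n d e :=
  Submodule.Quotient.mk (fun j =>
    if (Quotient.mk (MulAction.orbitRel G (Fin n)) j :
        MulAction.orbitRel.Quotient G (Fin n)) = O then (1 : ℝ) else 0)

/-- Indicator vector of an orbit. -/
noncomputable def chiVec (n : ℕ) (G : Type*) [Group G] [MulAction G (Fin n)]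
    (O : MulAction.orbitRel.Quotient G (Fin n)) : Fin n → ℝ :=
  fun j => if (Quotient.mk (MulAction.orbitRel G (Fin n)) j :
      MulAction.orbitRel.Quotient G (Fin n)) = O then (1 : ℝ) else 0

lemma orbitClass_eq_mk_chi (n d : ℕ) (G : Type*) [Group G] [MulAction G (Fin n)]
    (e : Fin n → (Fin d → ℝ)) (O : MulAction.orbitRel.Quotient G (Fin n)) :
    orbitClass n d G e O = Submodule.Quotient.mk (chiVec n G O) := rfl

/-- Key: a G-invariant vector in the image of divMapR is zero. -/
lemma key_inv_zero (n d : ℕ) (G : Type*) [Group G] [Finite G] [MulAction G (Fin n)]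
    (ρ : G →* ((Fin d → ℝ) ≃ₗ[ℝ] (Fin d → ℝ)))
    (e : Fin n → (Fin d → ℝ))
    (hcompat : ∀ (g : G) (i : Fin n), ρ g (e i) = e (g • i))
    (hanis : ∀ v : Fin d → ℝ, (∀ g : G, ρ g v = v) → v = 0)
    (v : Fin n → ℝ) (hv : ∀ (g : G) (i : Fin n), v (g • i) = v i)
    (hmem : v ∈ LinearMap.range (divMapR n d e)) : v = 0 := by
  cases nonempty_fintype G
  obtain ⟨m, hm⟩ := hmem
  have hfix : ∀ w : Fin d → ℝ, (∑ g : G, ρ g w) = 0 := by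
    intro w
    apply hanis
    intro h
    rw [map_sum]
    rw [← Equiv.sum_comp (Equiv.mulLeft h) (fun g => ρ g w)]
    refine Finset.sum_congr rfl fun g _ => ?_
    show ρ h (ρ g w) = ρ ((Equiv.mulLeft h) g) w
    simp only [Equiv.coe_mulLeft, map_mul]
    rfl
  have happ : ∀ i, v i = ∑ j, e i j * m j := by
    intro i
    rw [← hm]
    simp [divMapR, LinearMap.pi_apply]
  funext i
  have h1 : (Fintype.card G : ℝ) * v i = ∑ g : G, v (g • i) := by
    simp [hv, Finset.sum_const, nsmul_eq_mul]
  have h2 : ∑ g : G, v (g • i) = 0 := by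
    calc ∑ g : G, v (g • i) = ∑ g : G, ∑ j, (ρ g (e i)) j * m j := by
          refine Finset.sum_congr rfl fun g _ => ?_
          rw [happ, hcompat]
      _ = ∑ j, (∑ g : G, ρ g (e i)) j * m j := by
          rw [Finset.sum_comm]
          refine Finset.sum_congr rfl fun j _ => ?_
          rw [Finset.sum_apply, Finset.sum_mul]
      _ = 0 := by rw [hfix]; simp
  have hcard : (Fintype.card G : ℝ) ≠ 0 := by
    exact_mod_cast Fintype.card_ne_zero
  have := h1.trans h2
  have hvi : v i = 0 := (mul_eq_zero.mp this).resolve_left hcard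
  simpa using hvi

/-- Anisotropic case: Σ a complete regular G-invariant fan with rays e₁,…,e_n spanning
N_ℝ, permuted by the finite group G in l orbits, with (N_ℝ)^G = 0.  Then the
G-invariant part of the effective cone in Pic(P_Σ) ⊗ ℝ is a simplicial cone of
dimension l: the l orbit-sum classes Σ_{j ∈ O}[D_j] are linearly independent, they span
a subspace of dimension l = (number of orbits), and a G-invariant effective class is
exactly a nonnegative combination of them. -/
theorem stmt_9 (n d : ℕ) (G : Type*) [Group G] [Finite G] [MulAction G (Fin n)]
    (ρ : G →* ((Fin d → ℝ) ≃ₗ[ℝ] (Fin d → ℝ)))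
    (e : Fin n → (Fin d → ℝ))
    (hcompat : ∀ (g : G) (i : Fin n), ρ g (e i) = e (g • i))
    (hspan : Submodule.span ℝ (Set.range e) = ⊤)
    (hanis : ∀ v : Fin d → ℝ, (∀ g : G, ρ g v = v) → v = 0) :
    LinearIndependent ℝ (orbitClass n d G e) ∧
    Module.finrank ℝ (Submodule.span ℝ (Set.range (orbitClass n d G e))) =
      Nat.card (MulAction.orbitRel.Quotient G (Fin n)) ∧
    ∀ q : PicR n d e,
      (∃ a : Fin n → ℝ, (∀ i, 0 ≤ a i) ∧ (∀ (g : G) (i : Fin n), a (g • i) = a i) ∧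
          Submodule.Quotient.mk a = q) ↔
      (∃ c : MulAction.orbitRel.Quotient G (Fin n) → ℝ, (∀ O, 0 ≤ c O) ∧
          q = ∑ O, c O • orbitClass n d G e O) := by
  have hmkeq : ∀ (g : G) (j : Fin n),
      (Quotient.mk (MulAction.orbitRel G (Fin n)) (g • j) :
        MulAction.orbitRel.Quotient G (Fin n)) = Quotient.mk _ j :=
    fun g j => Quotient.sound ⟨g, rfl⟩
  have hsum : ∀ (c : MulAction.orbitRel.Quotient G (Fin n) → ℝ) (j : Fin n),
      (∑ O, c O • chiVec n G O) j = c (Quotient.mk _ j) := by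
    intro c j
    rw [Finset.sum_apply]
    simp [chiVec, Finset.sum_ite_eq]
  have hmkq : ∀ c : MulAction.orbitRel.Quotient G (Fin n) → ℝ,
      (∑ O, c O • orbitClass n d G e O : PicR n d e)
        = Submodule.Quotient.mk (∑ O, c O • chiVec n G O) := by
    intro c
    simp only [orbitClass_eq_mk_chi, ← Submodule.mkQ_apply, ← map_smul, ← map_sum]
  have hout : ∀ (a : Fin n → ℝ), (∀ (g : G) (i : Fin n), a (g • i) = a i) →
      ∀ j : Fin n, a (Quotient.out (Quotient.mk (MulAction.orbitRel G (Fin n)) j)) = a j := by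
    intro a hainv j
    obtain ⟨g, hg⟩ := Quotient.mk_out (s := MulAction.orbitRel G (Fin n)) j
    rw [← hg, hainv]
  have hLI : LinearIndependent ℝ (orbitClass n d G e) := by
    rw [Fintype.linearIndependent_iff]
    intro c hc
    rw [hmkq, Submodule.Quotient.mk_eq_zero] at hc
    have hw0 : (∑ O, c O • chiVec n G O) = 0 := by
      refine key_inv_zero n d G ρ e hcompat hanis _ ?_ hc
      intro g i
      rw [hsum, hsum, hmkeq]
    intro O
    have := congrFun hw0 (Quotient.out O)
    rw [hsum] at this
    simpa [Quotient.out_eq] using this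
  refine ⟨hLI, (finrank_span_eq_card hLI).trans Nat.card_eq_fintype_card.symm, ?_⟩
  intro q
  constructor
  · rintro ⟨a, ha0, hainv, rfl⟩
    refine ⟨fun O => a (Quotient.out O), fun O => ha0 _, ?_⟩
    rw [hmkq]
    congr 1
    funext j
    rw [hsum, hout a hainv]
  · rintro ⟨c, hc0, rfl⟩
    refine ⟨fun j => c (Quotient.mk _ j), fun j => hc0 _, fun g i => congrArg c (hmkeq g i), ?_⟩
    rw [hmkq]
    congr 1
    funext j
    rw [hsum]
end
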